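/- If G is a bi-directed graph whose skeleton contains, as an induced subgraph on four vertices {x, v, w, y}, either the path x↔v↔w↔y (with no other adjacencies among the four) or the four-cycle x↔v↔w↔y↔x (with v,y non-adjacent and x,w non-adjacent), then in every ancestral graph G̅ Markov equivalent to G with the same skeleton, the edge between v and w is bi-directed. -/

import Mathlib

/-- Possible edge types between an ordered pair of distinct vertices of a
simple mixed graph.  `arrowTo` at `(v, w)` means `v → w`, `arrowFrom` means
`v ← w`, `undir` means `v − w` and `bidir` means `v ↔ w`. -/
inductive EType : Type
  | none | undir | arrowTo | arrowFrom | bidir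
deriving DecidableEq

/-- The edge type seen from the reversed ordered pair of vertices. -/
def EType.mirror : EType → EType
  | .none => .none
  | .undir => .undir
  | .arrowTo => .arrowFrom
  | .arrowFrom => .arrowTo
  | .bidir => .bidir

/-- A simple mixed graph: at most one edge (undirected, directed or
bi-directed) between any two distinct vertices, and no self loops. -/
structure MixedGraph (V : Type) where
  E : V → V → EType
  no_loop : ∀ v, E v v = .none
  symm : ∀ v w, E w v = (E v w).mirror

/-- `(a, b, c)` are three consecutive vertices on the path `p`. -/
def ConsecTriple {V : Type} (p : List V) (a b c : V) : Prop :=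
  ∃ l1 l2, p = l1 ++ a :: b :: c :: l2

namespace MixedGraph

variable {V : Type} (G : MixedGraph V)

/-- `v − w` is an edge of `G`. -/
def Undir (v w : V) : Prop := G.E v w = .undir

/-- `v → w` is an edge of `G`. -/
def Dir (v w : V) : Prop := G.E v w = .arrowTo

/-- `v ↔ w` is an edge of `G`. -/
def Bidir (v w : V) : Prop := G.E v w = .bidir

/-- `v` and `w` are adjacent (joined by some edge). -/
def Adj (v w : V) : Prop := G.E v w ≠ .none

/-- The edge between `a` and `b` has an arrowhead at `b`. -/
def HeadAt (a b : V) : Prop := G.E a b = .arrowTo ∨ G.E a b = .bidir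

/-- Closed boundary: `v` together with its adjacent vertices. -/
def Bd (v : V) : Set V := insert v {w | G.Adj v w}

/-- A set of vertices is complete if all of its pairs of distinct
vertices are adjacent. -/
def Complete (S : Set V) : Prop := ∀ v ∈ S, ∀ w ∈ S, v ≠ w → G.Adj v w

/-- A vertex is simplicial if its closed boundary is complete. -/
def Simplicial (v : V) : Prop := G.Complete (G.Bd v)

/-- `v` is an ancestor of `w`: `v = w` or there is a directed path from
`v` to `w`. -/
def Anc (v w : V) : Prop := Relation.ReflTransGen G.Dir v w

/-- The set of ancestors of vertices in `C`. -/
def anSet (C : Set V) : Set V := {v | ∃ c ∈ C, G.Anc v c}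

/-- `G` is an ancestral graph. -/
def Ancestral : Prop :=
  (∀ v w, G.Dir v w → ¬ G.Anc w v) ∧
  (∀ v w, G.Undir v w → ∀ u, ¬ G.HeadAt u v) ∧
  (∀ v w, G.Bidir v w → ¬ G.Anc v w)

/-- The boundary containment property. -/
def BdContain : Prop :=
  (∀ v w, G.Undir v w → G.Bd v = G.Bd w) ∧
  (∀ v w, G.Dir v w → G.Bd v ⊆ G.Bd w)

/-- `b` is a collider between consecutive neighbours `a` and `c`. -/
def Collider (a b c : V) : Prop := G.HeadAt a b ∧ G.HeadAt c b

/-- A path: a list of distinct vertices, consecutive ones adjacent. -/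
def IsPath (p : List V) : Prop := p.Nodup ∧ p.Chain' G.Adj

/-- `p` is an m-connecting path given `C`: every non-collider on it is
outside `C` and every collider on it is an ancestor of `C`. -/
def IsMConnPath (C : Set V) (p : List V) : Prop :=
  G.IsPath p ∧
  ∀ a b c, ConsecTriple p a b c →
    (G.Collider a b c → b ∈ G.anSet C) ∧ (¬ G.Collider a b c → b ∉ C)

/-- `v` and `w` are m-connected given `C`. -/
def MConn (v w : V) (C : Set V) : Prop :=
  ∃ p, G.IsMConnPath C p ∧ p.head? = some v ∧ p.getLast? = some w

/-- `v` and `w` are m-separated given `C`. -/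
def MSep (v w : V) (C : Set V) : Prop := ¬ G.MConn v w C

/-- A maximal (ancestral) graph: every pair of distinct non-adjacent
vertices is m-separated given some set. -/
def Maximal : Prop :=
  ∀ v w, v ≠ w → ¬ G.Adj v w → ∃ C : Set V, v ∉ C ∧ w ∉ C ∧ G.MSep v w C

/-- `G` is a bi-directed graph. -/
def Bidirected : Prop := ∀ v w, G.E v w = .none ∨ G.E v w = .bidir

/-- `G` is an undirected graph. -/
def UndirectedG : Prop := ∀ v w, G.E v w = .none ∨ G.E v w = .undir

/-- `G` is a directed acyclic graph. -/
def IsDAG : Prop :=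
  (∀ v w, G.E v w = .none ∨ G.E v w = .arrowTo ∨ G.E v w = .arrowFrom) ∧
  (∀ v w, G.Dir v w → ¬ G.Anc w v)

/-- `G` and `H` have the same skeleton. -/
def SameSkeleton (H : MixedGraph V) : Prop := ∀ v w, G.Adj v w ↔ H.Adj v w

/-- `G` and `H` are Markov equivalent: their m-separation relations
coincide. -/
def MarkovEquiv (H : MixedGraph V) : Prop :=
  ∀ v w (C : Set V), v ≠ w → v ∉ C → w ∉ C → (G.MSep v w C ↔ H.MSep v w C)

open Classical in
/-- The edge map obtained from `G` by dropping all arrowheads at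
simplicial vertices. -/
noncomputable def dropE (v w : V) : EType :=
  match G.E v w with
  | .none => .none
  | .undir => .undir
  | .arrowTo => if G.Simplicial w then .undir else .arrowTo
  | .arrowFrom => if G.Simplicial v then .undir else .arrowFrom
  | .bidir =>
      if G.Simplicial v then (if G.Simplicial w then .undir else .arrowTo)
      else (if G.Simplicial w then .arrowFrom else .bidir)

/-- The graph obtained from `G` by dropping all arrowheads at simplicial
vertices; for a bi-directed graph `G` this is the simplicial graph `Gˢ`. -/
noncomputable def drop : MixedGraph V where
  E := G.dropE
  no_loop v := by simp [dropE, G.no_loop]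
  symm v w := by
    unfold dropE
    rw [G.symm v w]
    cases h : G.E v w <;>
      simp only [EType.mirror] <;> split_ifs <;> simp_all [EType.mirror]

open Classical in
/-- The edge map of the minimally oriented graph `G^min_<`: starting from
the simplicial graph, each bi-directed edge `v ↔ w` with `Bd v ⊆ Bd w`
and `v < w` is replaced by `v → w`. -/
noncomputable def gminE [LinearOrder V] (v w : V) : EType :=
  match G.dropE v w with
  | .bidir =>
      if G.Bd v ⊆ G.Bd w ∧ v < w then .arrowTo
      else if G.Bd w ⊆ G.Bd v ∧ w < v then .arrowFrom
      else .bidir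
  | e => e

/-- The graph `G^min_<` produced by Algorithm 4.2 from `G` and the total
order on `V`. -/
noncomputable def gmin [LinearOrder V] : MixedGraph V where
  E := G.gminE
  no_loop v := by
    have h := G.drop.no_loop v
    simp only [drop] at h
    simp [gminE, h]
  symm v w := by
    have h := G.drop.symm v w
    simp only [drop] at h
    unfold gminE
    rw [h]
    cases hE : G.dropE v w <;> simp only [EType.mirror]
    case bidir =>
      by_cases c1 : G.Bd v ⊆ G.Bd w ∧ v < w
      · have c2 : ¬ (G.Bd w ⊆ G.Bd v ∧ w < v) := fun h' => lt_asymm c1.2 h'.2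
        simp [c1, c2, EType.mirror]
      · by_cases c2 : G.Bd w ⊆ G.Bd v ∧ w < v
        · simp [c1, c2, EType.mirror]
        · simp [c1, c2, EType.mirror]

/-- Total number of arrowheads of `G`: the number of directed edges plus
twice the number of bi-directed edges. -/
noncomputable def arr : ℕ :=
  {p : V × V | G.Dir p.1 p.2}.ncard + {p : V × V | G.Bidir p.1 p.2}.ncard

end MixedGraph

/-- `Gm` is a minimally oriented graph for `G`. -/
def MinOriented {V : Type} (G Gm : MixedGraph V) : Prop :=
  Gm.Ancestral ∧ Gm.Maximal ∧ G.MarkovEquiv Gm ∧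
  ∀ H : MixedGraph V, H.Ancestral → H.Maximal → G.MarkovEquiv H → Gm.arr ≤ H.arr

/-! In a bi-directed graph every path with an inner vertex has a collider there, so
non-adjacent vertices are m-separated by `∅`. Markov equivalence transfers this to any
graph with the same skeleton, in which the paths `x, v, w` and `v, w, y` must then collide
at `v` and at `w` respectively: the edge between `v` and `w` has arrowheads at both ends. -/

namespace MixedGraph

variable {V : Type} {G : MixedGraph V}

theorem ne_of_adj {a b : V} (h : G.Adj a b) : a ≠ b := by
  rintro rfl
  exact h (G.no_loop a)

theorem headAt_of_bidir {a b : V} (h : G.Bidir a b) : G.HeadAt a b := Or.inr h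

theorem Bidir.symm {a b : V} (h : G.Bidir a b) : G.Bidir b a := by
  rw [Bidir, G.symm, h]
  rfl

theorem bidir_of_headAt {a b : V} (hab : G.HeadAt a b) (hba : G.HeadAt b a) : G.Bidir a b := by
  rw [HeadAt, G.symm a b] at hba
  rcases hab with h | h <;> rcases hba with h' | h' <;> simp_all [Bidir, EType.mirror]

theorem Bidirected.bidir_of_adj (hG : G.Bidirected) {a b : V} (h : G.Adj a b) :
    G.Bidir a b :=
  (hG a b).resolve_left h

@[simp]
theorem anSet_empty : G.anSet ∅ = ∅ := by
  ext u
  simp [anSet]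

theorem consecTriple_triple {a b c a' b' c' : V} (h : ConsecTriple [a, b, c] a' b' c') :
    a' = a ∧ b' = b ∧ c' = c := by
  obtain ⟨l₁, l₂, h⟩ := h
  rcases l₁ with _ | ⟨_, l₁⟩
  · simp only [List.nil_append, List.cons.injEq] at h
    exact ⟨h.1.symm, h.2.1.symm, h.2.2.1.symm⟩
  · have hlen := congrArg List.length h
    simp only [List.length_cons, List.length_nil, List.cons_append, List.length_append] at hlen
    omega

theorem Bidirected.msep_empty (hG : G.Bidirected) {a b : V} (hab : a ≠ b)
    (hadj : ¬ G.Adj a b) : G.MSep a b ∅ := by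
  rintro ⟨p, ⟨⟨-, hchain⟩, htriple⟩, hhead, hlast⟩
  match p, hchain, htriple, hhead, hlast with
  | [], _, _, hhead, _ => simp at hhead
  | [_], _, _, hhead, hlast =>
    simp only [List.head?_cons, List.getLast?_singleton, Option.some.injEq] at hhead hlast
    exact hab (hhead.symm.trans hlast)
  | [_, _], hchain, _, hhead, hlast =>
    simp only [List.head?_cons, List.getLast?_cons_cons, List.getLast?_singleton,
      Option.some.injEq] at hhead hlast
    subst hhead hlast
    exact hadj (List.isChain_cons_cons.mp hchain).1
  | a' :: b' :: c' :: rest, hchain, htriple, _, _ =>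
    obtain ⟨h₁, h₂⟩ : G.Adj a' b' ∧ G.Adj b' c' :=
      ⟨(List.isChain_cons_cons.mp hchain).1,
        (List.isChain_cons_cons.mp (List.isChain_cons_cons.mp hchain).2).1⟩
    have hcol : G.Collider a' b' c' :=
      ⟨headAt_of_bidir (hG.bidir_of_adj h₁), headAt_of_bidir (hG.bidir_of_adj h₂).symm⟩
    simpa using (htriple a' b' c' ⟨[], rest, rfl⟩).1 hcol

theorem collider_of_msep_empty {a b c : V} (hac : a ≠ c) (h₁ : G.Adj a b) (h₂ : G.Adj b c)
    (hsep : G.MSep a c ∅) : G.Collider a b c := by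
  by_contra hcol
  refine hsep ⟨[a, b, c], ⟨⟨?_, ?_⟩, ?_⟩, rfl, rfl⟩
  · simp [ne_of_adj h₁, ne_of_adj h₂, hac]
  · exact List.isChain_cons_cons.mpr ⟨h₁, List.isChain_pair.mpr h₂⟩
  · intro a' b' c' htriple
    obtain ⟨rfl, rfl, rfl⟩ := consecTriple_triple htriple
    exact ⟨fun h => absurd h hcol, by simp⟩

end MixedGraph

theorem stmt18_general {V : Type} (G : MixedGraph V) (hG : G.Bidirected)
    (x v w y : V) (hnd : [x, v, w, y].Nodup)
    (hcase :
      (G.Adj x v ∧ G.Adj v w ∧ G.Adj w y ∧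
        ¬ G.Adj x w ∧ ¬ G.Adj x y ∧ ¬ G.Adj v y) ∨
      (G.Adj x v ∧ G.Adj v w ∧ G.Adj w y ∧ G.Adj y x ∧
        ¬ G.Adj x w ∧ ¬ G.Adj v y))
    (Gb : MixedGraph V) (hsk : G.SameSkeleton Gb)
    (heq : G.MarkovEquiv Gb) :
    Gb.Bidir v w := by
  obtain ⟨hxv, hvw, hwy, hxw, hvy⟩ : G.Adj x v ∧ G.Adj v w ∧ G.Adj w y ∧
      ¬ G.Adj x w ∧ ¬ G.Adj v y := by
    rcases hcase with ⟨h₁, h₂, h₃, h₄, -, h₅⟩ | ⟨h₁, h₂, h₃, -, h₄, h₅⟩ <;>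
      exact ⟨h₁, h₂, h₃, h₄, h₅⟩
  have hx_ne_w : x ≠ w := by intro h; simp [h] at hnd
  have hv_ne_y : v ≠ y := by intro h; simp [h] at hnd
  have sep_xw : Gb.MSep x w ∅ :=
    (heq x w ∅ hx_ne_w (by simp) (by simp)).mp (hG.msep_empty hx_ne_w hxw)
  have sep_vy : Gb.MSep v y ∅ :=
    (heq v y ∅ hv_ne_y (by simp) (by simp)).mp (hG.msep_empty hv_ne_y hvy)
  have col_v := MixedGraph.collider_of_msep_empty hx_ne_w ((hsk x v).mp hxv)
    ((hsk v w).mp hvw) sep_xw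
  have col_w := MixedGraph.collider_of_msep_empty hv_ne_y ((hsk v w).mp hvw)
    ((hsk w y).mp hwy) sep_vy
  exact MixedGraph.bidir_of_headAt col_w.1 col_v.2

/-- If a bi-directed graph `G` contains, as an induced
subgraph on distinct vertices `{x, v, w, y}`, either the path
`x ↔ v ↔ w ↔ y` or the four-cycle `x ↔ v ↔ w ↔ y ↔ x`, then in every
ancestral graph Markov equivalent to `G` with the same skeleton the edge
between `v` and `w` is bi-directed. -/
theorem stmt18 {V : Type} (G : MixedGraph V) (hG : G.Bidirected)
    (x v w y : V) (hnd : [x, v, w, y].Nodup)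
    (hcase :
      (G.Adj x v ∧ G.Adj v w ∧ G.Adj w y ∧
        ¬ G.Adj x w ∧ ¬ G.Adj x y ∧ ¬ G.Adj v y) ∨
      (G.Adj x v ∧ G.Adj v w ∧ G.Adj w y ∧ G.Adj y x ∧
        ¬ G.Adj x w ∧ ¬ G.Adj v y))
    (Gb : MixedGraph V) (hanc : Gb.Ancestral) (hsk : G.SameSkeleton Gb)
    (heq : G.MarkovEquiv Gb) :
    Gb.Bidir v w :=
  stmt18_general G hG x v w y hnd hcase Gb hsk heq
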